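/- Sufficient decrease for PGD: choose z⁽⁰⁾ with ‖x − D z⁽⁰⁾‖₂ ≤ 1 and set S = supp(z⁽⁰⁾). If τ > 1 and s > max{2|S|, 2(1+λ|S|)/(λτ)}, then the PGD sequence satisfies L(z⁽ᵗ⁾) ≤ L(z⁽ᵗ⁻¹⁾) − ((τ−1)s/2)·‖z⁽ᵗ⁾ − z⁽ᵗ⁻¹⁾‖₂² for every t ≥ 1; consequently the sequence {L(z⁽ᵗ⁾)}_t is nonincreasing, bounded below by 0, and converges. -/
import Mathlib


open scoped BigOperators

noncomputable def l2norm {m : ℕ} (v : Fin m → ℝ) : ℝ := Real.sqrt (∑ i, (v i)^2)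

noncomputable def supp {n : ℕ} (z : Fin n → ℝ) : Finset (Fin n) := Finset.univ.filter (fun j => z j ≠ 0)

noncomputable def l0norm {n : ℕ} (z : Fin n → ℝ) : ℕ := (supp z).card

noncomputable def hardThresh {n : ℕ} (θ : ℝ) (u : Fin n → ℝ) : Fin n → ℝ :=
  fun j => if |u j| < θ then 0 else u j

noncomputable def Lobj {d n : ℕ} (D : Matrix (Fin d) (Fin n) ℝ) (x : Fin d → ℝ) (lam : ℝ)
    (z : Fin n → ℝ) : ℝ := (l2norm (x - D.mulVec z))^2 + lam * (l0norm z : ℝ)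

noncomputable def pgdSeq {d n : ℕ} (D : Matrix (Fin d) (Fin n) ℝ) (x : Fin d → ℝ)
    (lam τ s : ℝ) (z0 : Fin n → ℝ) : ℕ → (Fin n → ℝ)
  | 0 => z0
  | (t+1) =>
      hardThresh (Real.sqrt (2*lam/(τ*s)))
        (fun j => pgdSeq D x lam τ s z0 t j
          - (2/(τ*s)) * (D.transpose.mulVec (D.mulVec (pgdSeq D x lam τ s z0 t) - x)) j)

noncomputable def sigmaMinCols {d n : ℕ} (D : Matrix (Fin d) (Fin n) ℝ) (S : Finset (Fin n)) : ℝ :=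
  sInf {t | ∃ y : Fin n → ℝ, (∀ j ∉ S, y j = 0) ∧ l2norm y = 1 ∧ t = l2norm (D.mulVec y)}

noncomputable def sigmaMaxCols {d n : ℕ} (D : Matrix (Fin d) (Fin n) ℝ) (S : Finset (Fin n)) : ℝ :=
  sSup {t | ∃ y : Fin n → ℝ, (∀ j ∉ S, y j = 0) ∧ l2norm y = 1 ∧ t = l2norm (D.mulVec y)}

noncomputable def sigmaMax {d n : ℕ} (D : Matrix (Fin d) (Fin n) ℝ) : ℝ :=
  sSup {t | ∃ y : Fin n → ℝ, l2norm y = 1 ∧ t = l2norm (D.mulVec y)}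

def admissibleSubgrad {n : ℕ} (lam b : ℝ) (z r : Fin n → ℝ) : Prop :=
  (∀ j, z j ≠ 0 → r j = 0) ∧ (∀ j, z j = 0 → -(lam/b) ≤ r j ∧ r j ≤ lam/b)

noncomputable def frobNorm {a b : ℕ} (M : Matrix (Fin a) (Fin b) ℝ) : ℝ :=
  Real.sqrt (∑ i, ∑ j, (M i j)^2)

open Matrix

lemma l2norm_nonneg {m : ℕ} (v : Fin m → ℝ) : 0 ≤ l2norm v := Real.sqrt_nonneg _

lemma sq_l2norm {m : ℕ} (v : Fin m → ℝ) : (l2norm v)^2 = ∑ i, (v i)^2 :=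
  Real.sq_sqrt (by positivity)

lemma Lobj_eq {d n : ℕ} (D : Matrix (Fin d) (Fin n) ℝ) (x : Fin d → ℝ) (lam : ℝ)
    (w : Fin n → ℝ) :
    Lobj D x lam w = ∑ i, (x i - D.mulVec w i)^2 + lam * (l0norm w : ℝ) := by
  unfold Lobj
  rw [sq_l2norm]
  simp [Pi.sub_apply]

lemma mul_l0norm_eq {n : ℕ} (lam : ℝ) (w : Fin n → ℝ) :
    lam * (l0norm w : ℝ) = ∑ j, (if w j ≠ 0 then lam else 0) := by
  rw [l0norm, supp, Finset.card_filter]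
  push_cast
  rw [Finset.mul_sum]
  simp [mul_ite]

lemma prox_coord (lam a θ u v w : ℝ) (hlam : 0 < lam) (ha : 0 < a) (hθpos : 0 < θ)
    (hθ : a * θ^2 = lam) (hw : w = if |u| < θ then 0 else u) :
    (if w ≠ 0 then lam else 0) + a*(w - u)^2 ≤ (if v ≠ 0 then lam else 0) + a*(v - u)^2 := by
  have hzne : ¬ ((0:ℝ) ≠ 0) := fun hh => hh rfl
  by_cases h : |u| < θ
  · have hw0 : w = 0 := by rw [hw, if_pos h]
    have h1 : u^2 ≤ θ^2 := by
      rw [← sq_abs]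
      exact pow_le_pow_left₀ (abs_nonneg u) h.le 2
    have hu2 : a * u^2 ≤ lam := by nlinarith
    by_cases hv : v = 0
    · rw [hw0, hv]
    · rw [hw0, if_neg hzne, if_pos hv]
      nlinarith [sq_nonneg (v - u)]
  · have hwu : w = u := by rw [hw, if_neg h]
    have hune : u ≠ 0 := by
      intro h0
      apply h
      rw [h0]; simpa using hθpos
    have h1 : θ^2 ≤ u^2 := by
      rw [← sq_abs u]
      exact pow_le_pow_left₀ hθpos.le (not_lt.mp h) 2
    have hu2 : lam ≤ a * u^2 := by nlinarith
    rw [hwu, if_pos hune]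
    by_cases hv : v = 0
    · rw [hv, if_neg hzne]
      nlinarith
    · rw [if_pos hv]
      nlinarith [sq_nonneg (v - u)]

lemma key_step {d n : ℕ} (D : Matrix (Fin d) (Fin n) ℝ) (x : Fin d → ℝ) (lam τ s : ℝ)
    (S : Finset (Fin n))
    (hD : ∀ j, l2norm (fun i => D i j) ≤ 1)
    (hlam : 0 < lam) (hτ : 1 < τ)
    (hs1 : 2 * (S.card : ℝ) < s)
    (hs2 : 2 * (1 + lam * S.card) / (lam * τ) < s)
    (z : Fin n → ℝ) (hsupp : ∀ j ∉ S, z j = 0)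
    (hL : Lobj D x lam z ≤ 1 + lam * S.card) :
    (∀ j ∉ S, hardThresh (Real.sqrt (2*lam/(τ*s)))
        (fun j => z j - (2/(τ*s)) * (D.transpose.mulVec (D.mulVec z - x)) j) j = 0) ∧
    Lobj D x lam (hardThresh (Real.sqrt (2*lam/(τ*s)))
        (fun j => z j - (2/(τ*s)) * (D.transpose.mulVec (D.mulVec z - x)) j))
      ≤ Lobj D x lam z
        - ((τ-1)*s/2) * (l2norm (hardThresh (Real.sqrt (2*lam/(τ*s)))
            (fun j => z j - (2/(τ*s)) * (D.transpose.mulVec (D.mulVec z - x)) j) - z))^2 := by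
  have hτ0 : (0:ℝ) < τ := lt_trans one_pos hτ
  have hs0 : (0:ℝ) < s := lt_of_le_of_lt (by positivity) hs2
  have hts : (0:ℝ) < τ * s := mul_pos hτ0 hs0
  set θ := Real.sqrt (2*lam/(τ*s)) with hθdef
  have hθsq : θ^2 = 2*lam/(τ*s) := Real.sq_sqrt (by positivity)
  have hθpos : 0 < θ := Real.sqrt_pos.mpr (by positivity)
  set c := 2/(τ*s) with hc
  have hc0 : 0 < c := by positivity
  set zt : Fin n → ℝ := fun j => z j - c * (D.transpose.mulVec (D.mulVec z - x)) j with hztdef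
  set z' : Fin n → ℝ := hardThresh θ zt with hz'def
  set g : Fin n → ℝ := fun j => c * (D.transpose.mulVec (D.mulVec z - x)) j with hgdef
  have hztg : ∀ j, zt j = z j - g j := fun j => rfl
  have hz'j : ∀ j, z' j = if |zt j| < θ then 0 else zt j := fun j => rfl
  -- column norms squared
  have hcolsq : ∀ j, ∑ i, (D i j)^2 ≤ 1 := by
    intro j
    have h1 : ((l2norm (fun i => D i j)):ℝ)^2 = ∑ i, (D i j)^2 := sq_l2norm _
    nlinarith [hD j, l2norm_nonneg (fun i => D i j)]
  -- residual bound
  have hfz : ∑ i, (x i - D.mulVec z i)^2 ≤ 1 + lam * S.card := by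
    rw [Lobj_eq] at hL
    have h2 : (0:ℝ) ≤ lam * (l0norm z : ℝ) := by positivity
    linarith
  -- support preservation
  have hsupp' : ∀ j ∉ S, z' j = 0 := by
    intro j hj
    have hzj : z j = 0 := hsupp j hj
    have hztj : zt j = -(c * (D.transpose.mulVec (D.mulVec z - x)) j) := by
      rw [hztg j, hgdef, hzj]; ring
    have hrb : ((D.transpose.mulVec (D.mulVec z - x)) j)^2 ≤ 1 + lam*S.card := by
      have hexp : (D.transpose.mulVec (D.mulVec z - x)) j = ∑ i, D i j * (D.mulVec z - x) i := by
        simp [Matrix.mulVec, dotProduct, Matrix.transpose_apply]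
      have hcs := Finset.sum_mul_sq_le_sq_mul_sq Finset.univ (fun i => D i j)
        (fun i => (D.mulVec z - x) i)
      have hr2 : ∑ i, ((D.mulVec z - x) i)^2 = ∑ i, (x i - D.mulVec z i)^2 := by
        apply Finset.sum_congr rfl; intro i _; simp only [Pi.sub_apply]; ring
      have hr2nn : (0:ℝ) ≤ ∑ i, ((D.mulVec z - x) i)^2 := by positivity
      calc ((D.transpose.mulVec (D.mulVec z - x)) j)^2
          = (∑ i, D i j * (D.mulVec z - x) i)^2 := by rw [hexp]
        _ ≤ (∑ i, (D i j)^2) * ∑ i, ((D.mulVec z - x) i)^2 := hcs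
        _ ≤ 1 * (1 + lam*S.card) := by
            apply mul_le_mul (hcolsq j) _ hr2nn (by norm_num)
            rw [hr2]; exact hfz
        _ = 1 + lam*S.card := one_mul _
    have hkey : c^2 * (1 + lam * S.card) < 2*lam/(τ*s) := by
      have h2 : 2*(1+lam*(S.card:ℝ)) < s*(lam*τ) := (div_lt_iff₀ (by positivity)).mp hs2
      have hne : (τ*s) ≠ 0 := ne_of_gt hts
      have e1 : c^2 * (1 + lam*S.card) = (2*(1+lam*(S.card:ℝ))) * (2/((τ*s)^2)) := by
        rw [hc]; field_simp
      have e2 : 2*lam/(τ*s) = (s*(lam*τ)) * (2/((τ*s)^2)) := by field_simp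
      rw [e1, e2]
      exact mul_lt_mul_of_pos_right h2 (by positivity)
    have habs : |zt j| < θ := by
      apply abs_lt_of_sq_lt_sq _ hθpos.le
      rw [hθsq]
      calc (zt j)^2 = c^2 * ((D.transpose.mulVec (D.mulVec z - x)) j)^2 := by rw [hztj]; ring
        _ ≤ c^2 * (1 + lam*S.card) := by nlinarith [sq_nonneg c]
        _ < 2*lam/(τ*s) := hkey
    rw [hz'j j, if_pos habs]
  refine ⟨hsupp', ?_⟩
  -- the decrease inequality
  set δ : Fin n → ℝ := fun j => z' j - z j with hδdef
  have hδ0 : ∀ j ∉ S, δ j = 0 := by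
    intro j hj
    rw [hδdef]
    simp only [hsupp j hj, hsupp' j hj, sub_zero]
  have hΔnn : (0:ℝ) ≤ ∑ j, (δ j)^2 := by positivity
  -- prox inequality summed
  have hA : lam * (l0norm z' : ℝ) + (τ*s/2) * ∑ j, (z' j - zt j)^2
      ≤ lam * (l0norm z : ℝ) + (τ*s/2) * ∑ j, (z j - zt j)^2 := by
    rw [mul_l0norm_eq, mul_l0norm_eq, Finset.mul_sum, Finset.mul_sum,
      ← Finset.sum_add_distrib, ← Finset.sum_add_distrib]
    apply Finset.sum_le_sum
    intro j _
    exact prox_coord lam (τ*s/2) θ (zt j) (z j) (z' j) hlam (by positivity) hθpos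
      (by rw [hθsq]; field_simp) (hz'j j)
  -- expansions
  have hzzt : ∑ j, (z j - zt j)^2 = ∑ j, (g j)^2 := by
    apply Finset.sum_congr rfl; intro j _; rw [hztg j]; ring
  have hz'zt : ∑ j, (z' j - zt j)^2
      = ∑ j, (δ j)^2 + (2 * ∑ j, δ j * g j + ∑ j, (g j)^2) := by
    rw [Finset.mul_sum, ← Finset.sum_add_distrib, ← Finset.sum_add_distrib]
    apply Finset.sum_congr rfl
    intro j _
    rw [hztg j, hδdef]
    ring
  -- gradient identity
  have hG : ∑ j, δ j * g j = c * ∑ i, (D.mulVec δ i) * ((D.mulVec z - x) i) := by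
    have h1 : δ ⬝ᵥ (D.transpose.mulVec (D.mulVec z - x)) = (D.mulVec δ) ⬝ᵥ (D.mulVec z - x) := by
      rw [Matrix.dotProduct_mulVec, Matrix.vecMul_transpose]
    have h2 : ∑ j, δ j * (D.transpose.mulVec (D.mulVec z - x)) j
        = ∑ i, (D.mulVec δ i) * ((D.mulVec z - x) i) := h1
    rw [← h2, Finset.mul_sum]
    apply Finset.sum_congr rfl
    intro j _
    rw [hgdef]
    ring
  -- quadratic expansion of the fidelity term
  have hmv : ∀ i, D.mulVec z' i = D.mulVec z i + D.mulVec δ i := by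
    intro i
    have hz'zδ : z' = z + δ := by funext j; rw [hδdef]; simp
    rw [hz'zδ, Matrix.mulVec_add]
    rfl
  have hF' : ∑ i, (x i - D.mulVec z' i)^2
      = ∑ i, (x i - D.mulVec z i)^2
        + (2 * ∑ i, (D.mulVec δ i) * ((D.mulVec z - x) i) + ∑ i, (D.mulVec δ i)^2) := by
    rw [Finset.mul_sum, ← Finset.sum_add_distrib, ← Finset.sum_add_distrib]
    apply Finset.sum_congr rfl
    intro i _
    rw [hmv i]
    simp only [Pi.sub_apply]
    ring
  -- Cauchy-Schwarz bound on D δ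
  have hC : ∑ i, (D.mulVec δ i)^2 ≤ (S.card:ℝ) * ∑ j, (δ j)^2 := by
    have hrow : ∀ i, (D.mulVec δ i)^2 ≤ (∑ j ∈ S, (D i j)^2) * ∑ j ∈ S, (δ j)^2 := by
      intro i
      have he : D.mulVec δ i = ∑ j ∈ S, D i j * δ j := by
        have h0 : D.mulVec δ i = ∑ j, D i j * δ j := by
          simp [Matrix.mulVec, dotProduct]
        rw [h0]
        symm
        apply Finset.sum_subset (Finset.subset_univ S)
        intro j _ hj
        rw [hδ0 j hj, mul_zero]
      rw [he]
      exact Finset.sum_mul_sq_le_sq_mul_sq S _ _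
    have hsum1 : ∑ j ∈ S, ∑ i, (D i j)^2 ≤ (S.card:ℝ) := by
      calc ∑ j ∈ S, ∑ i, (D i j)^2 ≤ ∑ _j ∈ S, (1:ℝ) :=
            Finset.sum_le_sum (fun j _ => hcolsq j)
        _ = (S.card:ℝ) := by simp
    have hsum2 : ∑ j ∈ S, (δ j)^2 ≤ ∑ j, (δ j)^2 :=
      Finset.sum_le_sum_of_subset_of_nonneg (Finset.subset_univ S) (fun j _ _ => sq_nonneg _)
    have hsum3 : (0:ℝ) ≤ ∑ j ∈ S, (δ j)^2 := Finset.sum_nonneg (fun j _ => sq_nonneg _)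
    have hsum0 : (0:ℝ) ≤ ∑ j ∈ S, ∑ i, (D i j)^2 := by positivity
    calc ∑ i, (D.mulVec δ i)^2
        ≤ ∑ i : Fin d, (∑ j ∈ S, (D i j)^2) * ∑ j ∈ S, (δ j)^2 :=
          Finset.sum_le_sum (fun i _ => hrow i)
      _ = (∑ j ∈ S, ∑ i, (D i j)^2) * ∑ j ∈ S, (δ j)^2 := by
          rw [← Finset.sum_mul, Finset.sum_comm]
      _ ≤ (S.card:ℝ) * ∑ j, (δ j)^2 :=
          mul_le_mul hsum1 hsum2 hsum3 (Nat.cast_nonneg _)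
  -- put everything together
  have hnorm : (l2norm (z' - z))^2 = ∑ j, (δ j)^2 := by
    rw [sq_l2norm]
    apply Finset.sum_congr rfl
    intro j _
    simp [hδdef]
  have htsc : τ * s * c = 2 := by
    rw [hc]
    field_simp
  have hcard : (S.card:ℝ) * (∑ j, (δ j)^2) ≤ (s/2) * ∑ j, (δ j)^2 :=
    mul_le_mul_of_nonneg_right (by linarith) hΔnn
  rw [hzzt, hz'zt] at hA
  have eA : (τ*s/2) * (∑ j, (δ j)^2 + (2 * ∑ j, δ j * g j + ∑ j, (g j)^2))
      = (τ*s/2) * ∑ j, (δ j)^2 + (τ*s) * ∑ j, δ j * g j + (τ*s/2) * ∑ j, (g j)^2 := by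
    ring
  have hA2 : lam * (l0norm z' : ℝ)
      ≤ lam * (l0norm z : ℝ) - (τ*s/2) * ∑ j, (δ j)^2 - (τ*s) * ∑ j, δ j * g j := by
    linarith [hA, eA]
  have hB : (τ*s) * ∑ j, δ j * g j = 2 * ∑ i, (D.mulVec δ i) * ((D.mulVec z - x) i) := by
    rw [hG]
    calc τ*s*(c * ∑ i, (D.mulVec δ i) * ((D.mulVec z - x) i))
        = (τ*s*c) * ∑ i, (D.mulVec δ i) * ((D.mulVec z - x) i) := by ring
      _ = 2 * ∑ i, (D.mulVec δ i) * ((D.mulVec z - x) i) := by rw [htsc]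
  have e2 : (s/2) * ∑ j, (δ j)^2 - (τ*s/2) * ∑ j, (δ j)^2
      = -(((τ-1)*s/2) * ∑ j, (δ j)^2) := by ring
  rw [Lobj_eq, Lobj_eq, hnorm]
  linarith [hA2, hF', hC, hB, hcard, e2]


theorem stmt2 {d n : ℕ} (D : Matrix (Fin d) (Fin n) ℝ) (x : Fin d → ℝ)
    (lam τ s : ℝ) (z0 : Fin n → ℝ)
    (hx : l2norm x ≤ 1) (hD : ∀ j, l2norm (fun i => D i j) ≤ 1)
    (hlam : 0 < lam) (hτ : 1 < τ)
    (hz0 : l2norm (x - D.mulVec z0) ≤ 1)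
    (hs : s > max (2 * ((supp z0).card : ℝ))
                  (2 * (1 + lam * ((supp z0).card : ℝ)) / (lam * τ))) :
    (∀ t : ℕ, Lobj D x lam (pgdSeq D x lam τ s z0 (t+1))
        ≤ Lobj D x lam (pgdSeq D x lam τ s z0 t)
          - ((τ-1)*s/2) * (l2norm (pgdSeq D x lam τ s z0 (t+1) - pgdSeq D x lam τ s z0 t))^2) ∧
    (∀ t : ℕ, Lobj D x lam (pgdSeq D x lam τ s z0 (t+1))
        ≤ Lobj D x lam (pgdSeq D x lam τ s z0 t)) ∧
    (∀ t : ℕ, 0 ≤ Lobj D x lam (pgdSeq D x lam τ s z0 t)) ∧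
    (∃ l : ℝ, Filter.Tendsto (fun t => Lobj D x lam (pgdSeq D x lam τ s z0 t))
        Filter.atTop (nhds l)) := by
  set S : Finset (Fin n) := supp z0 with hS
  have hs1 : 2 * (S.card : ℝ) < s := lt_of_le_of_lt (le_max_left _ _) hs
  have hs2 : 2 * (1 + lam * S.card) / (lam * τ) < s := lt_of_le_of_lt (le_max_right _ _) hs
  have hτ0 : (0:ℝ) < τ := lt_trans one_pos hτ
  have hs0 : (0:ℝ) < s := lt_of_le_of_lt (by positivity) hs2
  -- unfolding of the recursion
  have hrec : ∀ t : ℕ, pgdSeq D x lam τ s z0 (t+1)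
      = hardThresh (Real.sqrt (2*lam/(τ*s)))
          (fun j => pgdSeq D x lam τ s z0 t j
            - (2/(τ*s)) * (D.transpose.mulVec (D.mulVec (pgdSeq D x lam τ s z0 t) - x)) j) :=
    fun t => rfl
  -- invariant
  have hinv : ∀ t : ℕ, (∀ j ∉ S, pgdSeq D x lam τ s z0 t j = 0) ∧
      Lobj D x lam (pgdSeq D x lam τ s z0 t) ≤ 1 + lam * S.card := by
    intro t
    induction t with
    | zero =>
        constructor
        · intro j hj
          simpa [hS, supp, pgdSeq] using hj
        · show Lobj D x lam z0 ≤ 1 + lam * S.card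
          rw [Lobj_eq]
          have h1 : ∑ i, (x i - D.mulVec z0 i)^2 ≤ 1 := by
            have e : (l2norm (x - D.mulVec z0))^2 = ∑ i, (x i - D.mulVec z0 i)^2 := by
              rw [sq_l2norm]; apply Finset.sum_congr rfl; intro i _; simp
            nlinarith [l2norm_nonneg (x - D.mulVec z0)]
          have h2 : (l0norm z0 : ℝ) = (S.card : ℝ) := by rw [l0norm, hS]
          rw [h2]
          linarith
    | succ t ih =>
        have hk := key_step D x lam τ s S hD hlam hτ hs1 hs2
          (pgdSeq D x lam τ s z0 t) ih.1 ih.2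
        rw [← hrec t] at hk
        refine ⟨hk.1, ?_⟩
        have hnn : 0 ≤ ((τ-1)*s/2) *
            (l2norm (pgdSeq D x lam τ s z0 (t+1) - pgdSeq D x lam τ s z0 t))^2 := by
          have h1 : (0:ℝ) ≤ (τ-1)*s/2 := by nlinarith
          positivity
        linarith [hk.2, ih.2]
  have h1 : ∀ t : ℕ, Lobj D x lam (pgdSeq D x lam τ s z0 (t+1))
      ≤ Lobj D x lam (pgdSeq D x lam τ s z0 t)
        - ((τ-1)*s/2) * (l2norm (pgdSeq D x lam τ s z0 (t+1) - pgdSeq D x lam τ s z0 t))^2 := by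
    intro t
    have hk := key_step D x lam τ s S hD hlam hτ hs1 hs2
      (pgdSeq D x lam τ s z0 t) (hinv t).1 (hinv t).2
    rw [← hrec t] at hk
    exact hk.2
  have h2 : ∀ t : ℕ, Lobj D x lam (pgdSeq D x lam τ s z0 (t+1))
      ≤ Lobj D x lam (pgdSeq D x lam τ s z0 t) := by
    intro t
    have hnn : 0 ≤ ((τ-1)*s/2) *
        (l2norm (pgdSeq D x lam τ s z0 (t+1) - pgdSeq D x lam τ s z0 t))^2 := by
      have ha : (0:ℝ) ≤ (τ-1)*s/2 := by nlinarith
      positivity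
    linarith [h1 t]
  have h3 : ∀ t : ℕ, 0 ≤ Lobj D x lam (pgdSeq D x lam τ s z0 t) := by
    intro t
    rw [Lobj]
    positivity
  refine ⟨h1, h2, h3, ?_⟩
  exact ⟨_, tendsto_atTop_ciInf (antitone_nat_of_succ_le h2)
    ⟨0, fun y ⟨t, ht⟩ => ht ▸ h3 t⟩⟩
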